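/- Let (W, w) be a fusion frame for H, A a bounded left inverse of the analysis operator T*_{W,w}, and V_i := A p_i 𝒲 for each i ∈ I. Assume (V, v) is a Bessel fusion sequence and the operator Q_{A,v}: 𝒲 → 𝒱 given by Q_{A,v}({f_j}) = {(1/v_i) A p_i({f_j})}_{i∈I} is well defined and bounded. Then Q_{A,v} is component preserving (Q_{A,v} p_i 𝒲 = p_i 𝒱 for all i) and T_{V,v} Q_{A,v} T*_{W,w} = I_H, so (V, v) is a Q_{A,v}-component preserving dual fusion frame of (W, w). -/

import Mathlib

open scoped InnerProductSpace ENNReal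
open ContinuousLinearMap

set_option synthInstance.maxHeartbeats 1000000
set_option maxHeartbeats 1000000

noncomputable section

/-- (W, w) is a fusion frame for H. -/
def IsFusionFrame {H : Type*} [NormedAddCommGroup H] [InnerProductSpace ℂ H]
    [CompleteSpace H] {I : Type*}
    (W : I → Submodule ℂ H) [∀ i, CompleteSpace (W i)] (w : I → ℝ) : Prop :=
  ∃ α β : ℝ, 0 < α ∧ α ≤ β ∧ ∀ f : H,
    Summable (fun i => (w i) ^ 2 * ‖(Submodule.orthogonalProjection (W i) f : H)‖ ^ 2) ∧
    α * ‖f‖ ^ 2 ≤ ∑' i, (w i) ^ 2 * ‖(Submodule.orthogonalProjection (W i) f : H)‖ ^ 2 ∧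
    ∑' i, (w i) ^ 2 * ‖(Submodule.orthogonalProjection (W i) f : H)‖ ^ 2 ≤ β * ‖f‖ ^ 2

/-- If A is a bounded left inverse of T_W*, V_i := A p_i 𝒲, (V,v) is a Bessel fusion
sequence and Q_{A,v} is well defined and bounded, then Q_{A,v} is component preserving and
(V,v) is a Q_{A,v}-dual fusion frame of (W,w). -/
theorem left_inverse_gives_component_preserving_dual
    {H : Type*} [NormedAddCommGroup H] [InnerProductSpace ℂ H] [CompleteSpace H]
    {I : Type*} [Countable I] [DecidableEq I]
    (W V : I → Submodule ℂ H) [∀ i, CompleteSpace (W i)] [∀ i, CompleteSpace (V i)]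
    (w v : I → ℝ) (hw : ∀ i, 0 < w i) (hv : ∀ i, 0 < v i)
    (hFFW : IsFusionFrame W w)
    (TW : lp (fun i => ↥(W i)) 2 →L[ℂ] H)
    (hTW : ∀ f : lp (fun i => ↥(W i)) 2,
      HasSum (fun i => (w i : ℂ) • ((f i : H))) (TW f))
    (A : lp (fun i => ↥(W i)) 2 →L[ℂ] H)
    (hA : A.comp (ContinuousLinearMap.adjoint TW) = ContinuousLinearMap.id ℂ H)
    (hV : ∀ i, (V i : Set H) = Set.range fun g : ↥(W i) => A (lp.single 2 i g))
    (TV : lp (fun i => ↥(V i)) 2 →L[ℂ] H)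
    (hTV : ∀ f : lp (fun i => ↥(V i)) 2,
      HasSum (fun i => (v i : ℂ) • ((f i : H))) (TV f))
    (Q : lp (fun i => ↥(W i)) 2 →L[ℂ] lp (fun i => ↥(V i)) 2)
    (hQ : ∀ (x : lp (fun i => ↥(W i)) 2) (i : I),
      ((Q x) i : H) = (v i)⁻¹ • A (lp.single 2 i (x i))) :
    (∀ i, Q '' (Set.range fun g : ↥(W i) => lp.single 2 i g) =
      Set.range fun h : ↥(V i) => lp.single 2 i h) ∧
    TV.comp (Q.comp (ContinuousLinearMap.adjoint TW)) = ContinuousLinearMap.id ℂ H := by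
  -- Key componentwise fact: Q (single i g) has zero components off i.
  have hQoff : ∀ (i : I) (g : ↥(W i)) (j : I), j ≠ i →
      (Q (lp.single 2 i g)) j = 0 := by
    intro i g j hj
    have h1 := hQ (lp.single 2 i g) j
    rw [lp.single_apply_ne (E := fun i => ↥(W i)) 2 i g hj] at h1
    have : (lp.single (E := fun i => ↥(W i)) 2 j (0 : ↥(W j))) = 0 := by
      apply lp.ext
      funext k
      by_cases hk : k = j
      · subst hk; rw [lp.single_apply_self]; rfl
      · rw [lp.single_apply_ne 2 j _ hk]; rfl
    rw [this] at h1
    simp only [map_zero, smul_zero] at h1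
    exact Subtype.coe_injective h1
  have hQi : ∀ (i : I) (g : ↥(W i)),
      ((Q (lp.single 2 i g)) i : H) = (v i)⁻¹ • A (lp.single 2 i g) := by
    intro i g
    have := hQ (lp.single 2 i g) i
    rwa [lp.single_apply_self] at this
  have hQsingle : ∀ (i : I) (g : ↥(W i)),
      Q (lp.single 2 i g) = lp.single 2 i ((Q (lp.single 2 i g)) i) := by
    intro i g
    apply lp.ext
    funext j
    by_cases hj : j = i
    · subst hj; rw [lp.single_apply_self]
    · rw [lp.single_apply_ne 2 i _ hj, hQoff i g j hj]
  constructor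
  · intro i
    ext y
    constructor
    · rintro ⟨x, ⟨g, rfl⟩, rfl⟩
      exact ⟨(Q (lp.single 2 i g)) i, (hQsingle i g).symm⟩
    · rintro ⟨h, rfl⟩
      -- (v i) • h ∈ V i, so it is A (single i g) for some g
      have hmem : ((v i : ℂ) • (h : H)) ∈ V i := (V i).smul_mem _ h.2
      rw [← SetLike.mem_coe, hV i] at hmem
      obtain ⟨g, hg⟩ := hmem
      have hg' : A (lp.single 2 i g) = (v i : ℂ) • (h : H) := hg
      refine ⟨lp.single 2 i g, ⟨g, rfl⟩, ?_⟩
      rw [hQsingle i g]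
      congr 1
      apply Subtype.coe_injective
      show (((Q (lp.single 2 i g)) i : H)) = (h : H)
      rw [hQi i g, hg']
      rw [← Complex.coe_smul, smul_smul]
      norm_cast
      rw [inv_mul_cancel₀ (hv i).ne']
      simp
  · ext f
    simp only [ContinuousLinearMap.comp_apply, ContinuousLinearMap.id_apply]
    set x := (ContinuousLinearMap.adjoint TW) f with hx
    -- TV (Q x) = A x
    have hsum1 : HasSum (fun i => (v i : ℂ) • ((Q x) i : H)) (TV (Q x)) := hTV (Q x)
    have hsum2 : HasSum (fun i => A (lp.single 2 i (x i))) (A x) := by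
      have := lp.hasSum_single (E := fun i => ↥(W i)) (p := 2) (by norm_num) x
      exact (A.hasSum this)
    have heq : (fun i => (v i : ℂ) • ((Q x) i : H)) = fun i => A (lp.single 2 i (x i)) := by
      funext i
      rw [hQ x i, ← Complex.coe_smul, smul_smul]
      norm_cast
      rw [mul_inv_cancel₀ (hv i).ne']
      simp
    rw [heq] at hsum1
    have hTVQ : TV (Q x) = A x := hsum1.unique hsum2
    rw [hTVQ]
    have := ContinuousLinearMap.ext_iff.mp hA f
    simpa using this
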